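/- Relevance of system U: if Γ ⊢(m,e) t : M is derivable in the quantitative type system U, then rv(t) ⊆ dom(Γ) ⊆ fv(t), where rv(t) is the set of reachable variables of t. -/
import Mathlib


/-! ## Terms of the call-by-value lambda-calculus with explicit substitutions -/

inductive Term : Type
  | var : ℕ → Term
  | lam : ℕ → Term → Term
  | app : Term → Term → Term
  | es  : Term → ℕ → Term → Term
deriving DecidableEq

namespace Term

/-- Free variables. -/
def fv : Term → Finset ℕ
  | var x => {x}
  | lam x t => t.fv.erase x
  | app t u => t.fv ∪ u.fv
  | es t x u => t.fv.erase x ∪ u.fv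

/-- Reachable variables. -/
def rv : Term → Finset ℕ
  | var x => {x}
  | lam _ _ => ∅
  | app t u => t.rv ∪ u.rv
  | es t x u => t.rv.erase x ∪ u.rv

/-- Values: variables and abstractions. -/
inductive Value : Term → Prop
  | var (x : ℕ) : Value (var x)
  | lam (x : ℕ) (t : Term) : Value (lam x t)

end Term

/-- Substitution contexts `L ::= ◇ | L[x\t]`, represented as a list of
explicit substitutions, innermost first. -/
abbrev SubCtx := List (ℕ × Term)

/-- Plugging a term in the hole of a substitution context. -/
def plug (t : Term) : SubCtx → Term
  | [] => t
  | (x, u) :: L => plug (Term.es t x u) L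

/-- Step kinds: `db`, `lsv`, and `[x\v]`. -/
inductive Kind : Type
  | db : Kind
  | lsv : Kind
  | sub : ℕ → Term → Kind

/-- Free variables of a step kind. -/
def Kind.fv : Kind → Finset ℕ
  | db => ∅
  | lsv => ∅
  | sub x v => insert x v.fv

/-! ## The linear CBV strategy (lcbv) -/

inductive LStep : Kind → Term → Term → Prop
  | db (x : ℕ) (t : Term) (L : SubCtx) (u : Term) :
      LStep .db (.app (plug (.lam x t) L) u) (plug (.es t x u) L)
  | sub (x : ℕ) (v : Term) : v.Value → x ∉ v.fv →
      LStep (.sub x v) (.var x) v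
  | lsv {t t' : Term} (x : ℕ) (v : Term) (L : SubCtx) :
      LStep (.sub x v) t t' →
      LStep .lsv (.es t x (plug v L)) (plug (.es t' x v) L)
  | appL {ρ t t'} (u) : LStep ρ t t' → LStep ρ (.app t u) (.app t' u)
  | appR {ρ u u'} (t) : LStep ρ u u' → LStep ρ (.app t u) (.app t u')
  | esL {ρ t t'} (x u) : x ∉ ρ.fv → LStep ρ t t' →
      LStep ρ (.es t x u) (.es t' x u)
  | esR {ρ u u'} (t x) : LStep ρ u u' → LStep ρ (.es t x u) (.es t x u')

/-- Top-level lcbv reduction `→Vtop := →db ∪ →lsv`. -/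
def LTop (t u : Term) : Prop := LStep .db t u ∨ LStep .lsv t u

/-! ## Hereditary abstractions and structures -/

inductive HAbs : Finset ℕ → Term → Prop
  | lam (A : Finset ℕ) (x t) : HAbs A (.lam x t)
  | var {A : Finset ℕ} {x} : x ∈ A → HAbs A (.var x)
  | sub1 {A t} (x u) : HAbs A t → x ∉ A → HAbs A (.es t x u)
  | sub2 {A t x u} : HAbs (insert x A) t → x ∉ A → HAbs A u →
      HAbs A (.es t x u)

inductive Struct : Finset ℕ → Term → Prop
  | var {S : Finset ℕ} {x} : x ∈ S → Struct S (.var x)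
  | app {S t} (u) : Struct S t → Struct S (.app t u)
  | sub1 {S t} (x u) : Struct S t → x ∉ S → Struct S (.es t x u)
  | sub2 {S t x u} : Struct (insert x S) t → x ∉ S → Struct S u →
      Struct S (.es t x u)

/-- Positional flags: applied `@` (`ap`) and non-applied `¬@` (`nap`). -/
inductive PFlag : Type
  | ap : PFlag
  | nap : PFlag
deriving DecidableEq

/-! ## The useful CBV strategy (ucbv) -/

inductive UStep : Kind → Finset ℕ → Finset ℕ → PFlag → Term → Term → Prop
  | db {A S μ} (x t L u) :
      UStep .db A S μ (.app (plug (.lam x t) L) u) (plug (.es t x u) L)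
  | sub {A S : Finset ℕ} {x v} : x ∈ A → v.Value → x ∉ v.fv →
      UStep (.sub x v) A S .ap (.var x) v
  | lsv {A S μ t t' x v} (L) :
      UStep (.sub x v) (insert x A) S μ t t' →
      x ∉ A ∪ S → HAbs A (plug v L) →
      UStep .lsv A S μ (.es t x (plug v L)) (plug (.es t' x v) L)
  | appL {ρ A S μ t t'} (u) :
      UStep ρ A S .ap t t' → UStep ρ A S μ (.app t u) (.app t' u)
  | appR {ρ A S μ t u u'} :
      Struct S t → UStep ρ A S .nap u u' →
      UStep ρ A S μ (.app t u) (.app t u')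
  | esR {ρ A S μ u u'} (t x) :
      UStep ρ A S .nap u u' → UStep ρ A S μ (.es t x u) (.es t x u')
  | esLA {ρ A S μ t t' x u} :
      UStep ρ (insert x A) S μ t t' → HAbs A u → x ∉ A ∪ S → x ∉ ρ.fv →
      UStep ρ A S μ (.es t x u) (.es t' x u)
  | esLS {ρ A S μ t t' x u} :
      UStep ρ A (insert x S) μ t t' → Struct S u → x ∉ A ∪ S → x ∉ ρ.fv →
      UStep ρ A S μ (.es t x u) (.es t' x u)

/-- Inductive characterisation of ucbv normal forms. -/
inductive NF : Finset ℕ → Finset ℕ → PFlag → Term → Prop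
  | var {A S : Finset ℕ} {μ x} : (x ∈ A → μ = .nap) → NF A S μ (.var x)
  | lam {A S : Finset ℕ} (x t) : NF A S .nap (.lam x t)
  | app {A S μ t u} : NF A S .ap t → NF A S .nap u → NF A S μ (.app t u)
  | esA {A S μ t x u} : NF (insert x A) S μ t → NF A S .nap u → HAbs A u →
      NF A S μ (.es t x u)
  | esS {A S μ t x u} : NF A (insert x S) μ t → NF A S .nap u → Struct S u →
      NF A S μ (.es t x u)

/-- Correctness of the frames `(A, S)` for `t`: `inv(A,S,t)`. -/
def Correct (A S : Finset ℕ) (t : Term) : Prop :=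
  A ∩ S = ∅ ∧ t.fv ⊆ A ∪ S

/-- Top-level ucbv reduction `→S_top := →db[∅,S,¬@] ∪ →lsv[∅,S,¬@]`. -/
def UTop (S : Finset ℕ) (t u : Term) : Prop :=
  UStep .db ∅ S .nap t u ∨ UStep .lsv ∅ S .nap t u

/-- Top-level ucbv reduction sequences counting `m` db-steps and `e` lsv-steps. -/
inductive UTopSeq (S : Finset ℕ) : Term → Term → ℕ → ℕ → Prop
  | refl (t) : UTopSeq S t t 0 0
  | db {t t' u m e} : UStep .db ∅ S .nap t t' → UTopSeq S t' u m e →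
      UTopSeq S t u (m + 1) e
  | lsv {t t' u m e} : UStep .lsv ∅ S .nap t t' → UTopSeq S t' u m e →
      UTopSeq S t u m (e + 1)

/-! ## The quantitative type system 𝒰 -/

/-- Types `M ::= s | I`, where `I` is an arrow multi-type, i.e. a finite
multiset (represented as a list) of arrow types `M? → M`; the left-hand side
of an arrow is an optional type, `none` standing for `⊥`. -/
inductive Ty : Type
  | st : Ty
  | mult : List (Option Ty × Ty) → Ty

/-- Optional types `M? ::= ⊥ | M`. -/
abbrev OTy := Option Ty

/-- Typing environments: functions from variables to optional types. -/
abbrev TyEnv := ℕ → OTy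

/-- Number of top-level arrows `#(M?)`. -/
def OTy.arrs : OTy → ℕ
  | none => 0
  | some .st => 0
  | some (.mult I) => I.length

/-- Tight constants: `s` and the empty multiset `[]`. -/
def TightTy (M : Ty) : Prop := M = .st ∨ M = .mult []

/-- Tight optional types. -/
def TightO : OTy → Prop
  | none => True
  | some M => TightTy M

/-- Tight typing environments. -/
def TightEnv (Γ : TyEnv) : Prop := ∀ x, TightO (Γ x)

/-- The controlled weakening relation `◁`. -/
inductive Weak : OTy → Ty → Prop
  | bot {M} : TightTy M → Weak none M
  | refl (M) : Weak (some M) M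

/-- Partial union of optional types: `⊥` is neutral, `s + s = s`, and
multiset union on arrow multi-types; undefined otherwise. -/
inductive OAdd : OTy → OTy → OTy → Prop
  | botL (a : OTy) : OAdd none a a
  | botR (a : OTy) : OAdd a none a
  | st : OAdd (some .st) (some .st) (some .st)
  | mult (I J : List (Option Ty × Ty)) :
      OAdd (some (.mult I)) (some (.mult J)) (some (.mult (I ++ J)))

/-- Pointwise (partial) sum of typing environments. -/
def EnvAdd (Γ Δ Θ : TyEnv) : Prop := ∀ x, OAdd (Γ x) (Δ x) (Θ x)

/-- Pointwise (partial) sum of a list of typing environments. -/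
inductive EnvSum : List TyEnv → TyEnv → Prop
  | nil : EnvSum [] (fun _ => none)
  | cons {Γ : TyEnv} {l : List TyEnv} {Δ Θ : TyEnv} :
      EnvSum l Δ → EnvAdd Γ Δ Θ → EnvSum (Γ :: l) Θ

/-- A premise of the abstraction rule: an environment `Γᵢ` (not mentioning the
bound variable), an optional type `Mᵢ?` for the bound variable, counters
`mᵢ, eᵢ`, and a result type `Nᵢ`. -/
structure AbsPrem : Type where
  env : TyEnv
  arg : OTy
  m : ℕ
  e : ℕ
  res : Ty

/-- Typing judgements `Γ ⊢(m,e) t : M` of system 𝒰. -/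
inductive Typing : TyEnv → ℕ → ℕ → Term → Ty → Prop
  | var (x : ℕ) (M : Ty) :
      Typing (fun y => if y = x then some M else none) 0 (OTy.arrs (some M))
        (.var x) M
  | abs (x : ℕ) (t : Term) (l : List AbsPrem) (Θ : TyEnv) :
      (∀ p ∈ l, p.env x = none) →
      (∀ p ∈ l, Typing (Function.update p.env x p.arg) p.m p.e t p.res) →
      EnvSum (l.map AbsPrem.env) Θ →
      Typing Θ (l.map AbsPrem.m).sum (l.map AbsPrem.e).sum (.lam x t)
        (.mult (l.map fun p => (p.arg, p.res)))
  | appP {Γ Δ Θ : TyEnv} {m e m' e' : ℕ} {t u : Term} {tc : Ty} :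
      Typing Γ m e t .st → TightTy tc → Typing Δ m' e' u tc →
      EnvAdd Γ Δ Θ →
      Typing Θ (m + m') (e + e') (.app t u) .st
  | appC {Γ Δ Θ : TyEnv} {m e m' e' : ℕ} {t u : Term} {M? : OTy} {M N : Ty} :
      Typing Γ m e t (.mult [(M?, N)]) → Weak M? M → Typing Δ m' e' u M →
      EnvAdd Γ Δ Θ →
      Typing Θ (1 + m + m') (e + e') (.app t u) N
  | es {Γ Δ Θ : TyEnv} {m e m' e' : ℕ} {t u : Term} {x : ℕ} {M? : OTy}
      {M N : Ty} :
      Γ x = none →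
      Typing (Function.update Γ x M?) m e t N → Weak M? M →
      Typing Δ m' e' u M → EnvAdd Γ Δ Θ →
      Typing Θ (m + m') (e + e') (.es t x u) N

/-- An environment `Γ` is appropriate for an abstraction frame `A` if
`Γ(x) ≠ s` for every `x ∈ A`. -/
def Appr (A : Finset ℕ) (Γ : TyEnv) : Prop := ∀ x ∈ A, Γ x ≠ some .st

lemma OAdd.left_ne {a b c : OTy} (h : OAdd a b c) (ha : a ≠ none) : c ≠ none := by
  cases h <;> simp_all

lemma OAdd.right_ne {a b c : OTy} (h : OAdd a b c) (hb : b ≠ none) : c ≠ none := by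
  cases h <;> simp_all

lemma OAdd.ne_cases {a b c : OTy} (h : OAdd a b c) (hc : c ≠ none) :
    a ≠ none ∨ b ≠ none := by
  cases h <;> simp_all

lemma EnvSum.ne_cases {l : List TyEnv} {Θ : TyEnv} (h : EnvSum l Θ) {x : ℕ}
    (hx : Θ x ≠ none) : ∃ Γ ∈ l, Γ x ≠ none := by
  induction h with
  | nil => simp_all
  | cons hs ha ih =>
      rcases (ha x).ne_cases hx with h1 | h1
      · exact ⟨_, List.mem_cons_self .., h1⟩
      · obtain ⟨Γ, hΓ, h2⟩ := ih h1
        exact ⟨Γ, List.mem_cons_of_mem _ hΓ, h2⟩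

/-- relevance of system 𝒰: if `Γ ⊢(m,e) t : M` is derivable,
then `rv(t) ⊆ dom(Γ) ⊆ fv(t)`. -/
theorem relevance {Γ : TyEnv} {m e : ℕ} {t : Term} {M : Ty}
    (h : Typing Γ m e t M) :
    (∀ x ∈ t.rv, Γ x ≠ none) ∧ (∀ x, Γ x ≠ none → x ∈ t.fv) := by
  induction h with
  | var x M =>
      constructor
      · intro y hy; simp [Term.rv] at hy; simp [hy]
      · intro y hy; simp [Term.fv]
        by_contra hne; simp [hne] at hy
  | abs x t l Θ h0 h1 hsum ih =>
      constructor
      · intro y hy; simp [Term.rv] at hy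
      · intro y hy
        obtain ⟨Δ, hΔ, hne⟩ := hsum.ne_cases hy
        simp only [List.mem_map] at hΔ
        obtain ⟨p, hp, rfl⟩ := hΔ
        have hyx : y ≠ x := by rintro rfl; exact hne (h0 p hp)
        have := (ih p hp).2 y (by rwa [Function.update_of_ne hyx])
        simp [Term.fv, Finset.mem_erase, hyx, this]
  | appP ht htc hu hadd iht ihu =>
      constructor
      · intro y hy
        simp [Term.rv] at hy
        rcases hy with hy | hy
        · exact (hadd y).left_ne (iht.1 y hy)
        · exact (hadd y).right_ne (ihu.1 y hy)
      · intro y hy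
        simp [Term.fv]
        rcases (hadd y).ne_cases hy with h1 | h1
        · exact Or.inl (iht.2 y h1)
        · exact Or.inr (ihu.2 y h1)
  | appC ht hw hu hadd iht ihu =>
      constructor
      · intro y hy
        simp [Term.rv] at hy
        rcases hy with hy | hy
        · exact (hadd y).left_ne (iht.1 y hy)
        · exact (hadd y).right_ne (ihu.1 y hy)
      · intro y hy
        simp [Term.fv]
        rcases (hadd y).ne_cases hy with h1 | h1
        · exact Or.inl (iht.2 y h1)
        · exact Or.inr (ihu.2 y h1)
  | es hΓx ht hw hu hadd iht ihu =>
      rename_i Γ' Δ Θ m e m' e' t u x M? M N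
      constructor
      · intro y hy
        simp [Term.rv, Finset.mem_erase] at hy
        rcases hy with ⟨hyx, hy⟩ | hy
        · have := iht.1 y hy
          rw [Function.update_of_ne hyx] at this
          exact (hadd y).left_ne this
        · exact (hadd y).right_ne (ihu.1 y hy)
      · intro y hy
        simp [Term.fv, Finset.mem_erase]
        rcases (hadd y).ne_cases hy with h1 | h1
        · have hyx : y ≠ x := by rintro rfl; exact h1 hΓx
          have := iht.2 y (by rwa [Function.update_of_ne hyx])
          exact Or.inl ⟨hyx, this⟩
        · exact Or.inr (ihu.2 y h1)
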